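/- Let Y, W be pointed metric spaces and T : Y → W Lipschitz with T(0)=0, 1 < p < ∞. The following are equivalent: (1) T is MS-Lipschitz p-nuclear; (2) there is K > 0 such that for all finite families (x_j^i), (y_j^i) in Y and (f_j) in W^#: |Σ_{j=1}^{m₁} Σ_{i=1}^{m₂} f_j(T x_j^i) − f_j(T y_j^i)| ≤ K sup_{s ∈ B_{Y^#}} (Σ_j |Σ_i s(x_j^i) − s(y_j^i)|^p)^{1/p} · ‖(f_j)‖_{ℓ_{p*}^{m₁,w}(W^#)}; (3) the linearization T̃ : F(Y) → F(W) is (Cohen) p-nuclear. -/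

import Mathlib

open scoped TensorProduct
open NormedSpace Finset

noncomputable section

/-- The strong `ℓ_p^m` norm of a finite family in a normed space. -/
def strongLp {E : Type*} [NormedAddCommGroup E] (p : ℝ) {m : ℕ} (x : Fin m → E) : ℝ :=
  (∑ j, ‖x j‖ ^ p) ^ (1 / p)

/-- The weak `ℓ_p^{m,w}` norm of a finite family in a normed space. -/
def weakLp {E : Type*} [NormedAddCommGroup E] [NormedSpace ℝ E] (p : ℝ) {m : ℕ}
    (x : Fin m → E) : ℝ :=
  sSup {r : ℝ | ∃ φ : StrongDual ℝ E, ‖φ‖ ≤ 1 ∧ r = (∑ j, |φ (x j)| ^ p) ^ (1 / p)}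

/-- A continuous linear operator is `p`-summing. -/
def IsPSumming {E F : Type*} [NormedAddCommGroup E] [NormedSpace ℝ E]
    [NormedAddCommGroup F] [NormedSpace ℝ F] (p : ℝ) (u : E →L[ℝ] F) : Prop :=
  ∃ K > 0, ∀ (m : ℕ) (x : Fin m → E),
    strongLp p (fun j => u (x j)) ≤ K * weakLp p x

/-- A continuous linear operator is (Cohen) strongly `p`-summing (`q` is the conjugate of `p`). -/
def IsStronglyPSumming {E F : Type*} [NormedAddCommGroup E] [NormedSpace ℝ E]
    [NormedAddCommGroup F] [NormedSpace ℝ F] (p q : ℝ) (u : E →L[ℝ] F) : Prop :=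
  ∃ K > 0, ∀ (m : ℕ) (x : Fin m → E) (φ : Fin m → StrongDual ℝ F),
    ∑ j, |φ j (u (x j))| ≤ K * strongLp p x * weakLp q φ

/-- A continuous linear operator is (Cohen) `p`-nuclear (`q` is the conjugate of `p`). -/
def IsPNuclear {E F : Type*} [NormedAddCommGroup E] [NormedSpace ℝ E]
    [NormedAddCommGroup F] [NormedSpace ℝ F] (p q : ℝ) (u : E →L[ℝ] F) : Prop :=
  ∃ K > 0, ∀ (m : ℕ) (x : Fin m → E) (φ : Fin m → StrongDual ℝ F),
    ∑ j, |φ j (u (x j))| ≤ K * weakLp p x * weakLp q φ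

/-- The Chevet–Saphar norm `d_p` on a tensor product (`q` is the conjugate of `p`):
infimum over all finite representations of `z`. -/
def dpNorm {E G : Type*} [NormedAddCommGroup E] [NormedSpace ℝ E]
    [NormedAddCommGroup G] [NormedSpace ℝ G] (p q : ℝ) (z : TensorProduct ℝ E G) : ℝ :=
  sInf {r : ℝ | ∃ (m : ℕ) (n : Fin m → E) (h : Fin m → G),
    z = ∑ j, n j ⊗ₜ[ℝ] h j ∧ r = weakLp p n * strongLp q h}

/-- The Chevet–Saphar norm `g_p` on a tensor product (`q` is the conjugate of `p`). -/
def gpNorm {E G : Type*} [NormedAddCommGroup E] [NormedSpace ℝ E]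
    [NormedAddCommGroup G] [NormedSpace ℝ G] (p q : ℝ) (z : TensorProduct ℝ E G) : ℝ :=
  sInf {r : ℝ | ∃ (m : ℕ) (n : Fin m → E) (h : Fin m → G),
    z = ∑ j, n j ⊗ₜ[ℝ] h j ∧ r = strongLp p n * weakLp q h}

/-- The tensor norm `w_p` (`q` is the conjugate of `p`). -/
def wpNorm {E G : Type*} [NormedAddCommGroup E] [NormedSpace ℝ E]
    [NormedAddCommGroup G] [NormedSpace ℝ G] (p q : ℝ) (z : TensorProduct ℝ E G) : ℝ :=
  sInf {r : ℝ | ∃ (m : ℕ) (n : Fin m → E) (h : Fin m → G),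
    z = ∑ j, n j ⊗ₜ[ℝ] h j ∧ r = weakLp p n * weakLp q h}

/-- `E`, together with the map `δ : Y → E`, is (isometrically) the Lipschitz-free space
of the pointed metric space `(Y, y₀)`: `δ` sends the base point to `0`, is an isometric
embedding, has dense linear span, and the norm of finite combinations of point evaluations
is computed against the unit ball of `Lip₀(Y)`. -/
structure IsFreeSpace (Y : Type*) [MetricSpace Y] (y₀ : Y)
    (E : Type*) [NormedAddCommGroup E] [NormedSpace ℝ E] [CompleteSpace E]
    (δ : Y → E) : Prop where
  map_base : δ y₀ = 0
  isometry : ∀ x y : Y, ‖δ x - δ y‖ = dist x y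
  dense_span : (Submodule.span ℝ (Set.range δ)).topologicalClosure = ⊤
  norm_eq : ∀ (n : ℕ) (a : Fin n → ℝ) (x : Fin n → Y),
    ‖∑ i, a i • δ (x i)‖ =
      sSup {r : ℝ | ∃ s : Y → ℝ, LipschitzWith 1 s ∧ s y₀ = 0 ∧ r = |∑ i, a i * s (x i)|}

end

noncomputable section

variable {Y W FY FW : Type*} [MetricSpace Y] [MetricSpace W]
  [NormedAddCommGroup FY] [NormedSpace ℝ FY] [NormedAddCommGroup FW] [NormedSpace ℝ FW]

/-- `T : Y → W` is MS-Lipschitz `p`-summing (`q` is the conjugate of `p`), the free spaces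
of `Y` and `W` being realized as `FY`, `FW` via `δY`, `δW`.  Elements of `W^# = F(W)^*` are
encoded as elements of `Dual ℝ FW`, and `d_p^L` is the Chevet–Saphar norm computed in
`F(Y) ⊗ W^#`. -/
def MSLipPSumming (p q : ℝ) (δY : Y → FY) (δW : W → FW) (T : Y → W) : Prop :=
  ∃ K > 0, ∀ (k : ℕ) (x y : Fin k → Y) (f : Fin k → StrongDual ℝ FW),
    |∑ l, (f l (δW (T (x l))) - f l (δW (T (y l))))| ≤
      K * dpNorm p q (∑ l, (δY (x l) - δY (y l)) ⊗ₜ[ℝ] f l)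

/-- `T : Y → W` is MS-strongly Lipschitz `p`-summing (`q` is the conjugate of `p`). -/
def MSStronglyLipPSumming (p q : ℝ) (δY : Y → FY) (δW : W → FW) (T : Y → W) : Prop :=
  ∃ K > 0, ∀ (k : ℕ) (x y : Fin k → Y) (f : Fin k → StrongDual ℝ FW),
    |∑ l, (f l (δW (T (x l))) - f l (δW (T (y l))))| ≤
      K * gpNorm p q (∑ l, (δY (x l) - δY (y l)) ⊗ₜ[ℝ] f l)

/-- `T : Y → W` is MS-Lipschitz `p`-nuclear (`q` is the conjugate of `p`). -/
def MSLipPNuclear (p q : ℝ) (δY : Y → FY) (δW : W → FW) (T : Y → W) : Prop :=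
  ∃ K > 0, ∀ (k : ℕ) (x y : Fin k → Y) (f : Fin k → StrongDual ℝ FW),
    |∑ l, (f l (δW (T (x l))) - f l (δW (T (y l))))| ≤
      K * wpNorm p q (∑ l, (δY (x l) - δY (y l)) ⊗ₜ[ℝ] f l)

end

/-! By Hahn–Banach and the norm formula of the free space, every `s` in the unit ball of `Y^#`
is `φ ∘ δ` for some `φ` in the unit ball of `F(Y)^*`, so the supremum in (2) is the weak `ℓ_p`
norm of the row sums `∑ᵢ (δ xⱼⁱ - δ yⱼⁱ)`. Then (1) ⇒ (2) bounds `w_p` by the representation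
`∑ⱼ (∑ᵢ (δ xⱼⁱ - δ yⱼⁱ)) ⊗ fⱼ`, and (3) ⇒ (1) holds because a `p`-nuclear `T̃` induces a functional on
`F(Y) ⊗ W^#` bounded by `w_p`. Finally (2) is the `p`-nuclear inequality for `T̃` on families in
the additive group generated by `δ(Y)`; by homogeneity it extends to the rational multiples of
that group, and since both sides are continuous and those multiples are dense in `F(Y)`, to all
families. -/

open Real

section WeakLp

variable {E : Type*} [NormedAddCommGroup E] [NormedSpace ℝ E] {p : ℝ} {m : ℕ}

theorem rpow_sum_rpow_mono (hp : 0 < p) {a b : Fin m → ℝ} (ha : ∀ j, 0 ≤ a j)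
    (hab : ∀ j, a j ≤ b j) : (∑ j, a j ^ p) ^ (1 / p) ≤ (∑ j, b j ^ p) ^ (1 / p) :=
  rpow_le_rpow (sum_nonneg fun j _ => rpow_nonneg (ha j) p)
    (sum_le_sum fun j _ => rpow_le_rpow (ha j) (hab j) hp.le) (by positivity)

theorem rpow_sum_mul_rpow (hp : 0 < p) {c : ℝ} (hc : 0 ≤ c) {a : Fin m → ℝ} (ha : ∀ j, 0 ≤ a j) :
    (∑ j, (c * a j) ^ p) ^ (1 / p) = c * (∑ j, a j ^ p) ^ (1 / p) := by
  simp_rw [mul_rpow hc (ha _), ← Finset.mul_sum]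
  rw [mul_rpow (by positivity) (sum_nonneg fun j _ => by have := ha j; positivity),
    ← rpow_mul hc, mul_one_div_cancel hp.ne', rpow_one]

theorem abs_apply_le_of_norm_le_one {φ : StrongDual ℝ E} (hφ : ‖φ‖ ≤ 1) (x : E) :
    |φ x| ≤ ‖x‖ := by
  simpa using φ.le_of_opNorm_le hφ x

theorem weakLp_bddAbove (hp : 0 < p) (x : Fin m → E) :
    BddAbove {r : ℝ | ∃ φ : StrongDual ℝ E, ‖φ‖ ≤ 1 ∧ r = (∑ j, |φ (x j)| ^ p) ^ (1 / p)} := by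
  refine ⟨strongLp p x, ?_⟩
  rintro r ⟨φ, hφ, rfl⟩
  exact rpow_sum_rpow_mono hp (fun j => abs_nonneg _) fun j => abs_apply_le_of_norm_le_one hφ _

theorem le_weakLp (hp : 0 < p) (x : Fin m → E) {φ : StrongDual ℝ E} (hφ : ‖φ‖ ≤ 1) :
    (∑ j, |φ (x j)| ^ p) ^ (1 / p) ≤ weakLp p x :=
  le_csSup (weakLp_bddAbove hp x) ⟨φ, hφ, rfl⟩

theorem weakLp_le {x : Fin m → E} {C : ℝ}
    (h : ∀ φ : StrongDual ℝ E, ‖φ‖ ≤ 1 → (∑ j, |φ (x j)| ^ p) ^ (1 / p) ≤ C) :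
    weakLp p x ≤ C :=
  csSup_le ⟨_, 0, by simp, rfl⟩ fun _ ⟨φ, hφ, hr⟩ => hr ▸ h φ hφ

theorem weakLp_nonneg (hp : 0 < p) (x : Fin m → E) : 0 ≤ weakLp p x :=
  (rpow_nonneg (sum_nonneg fun j _ => by positivity) _).trans
    (le_weakLp hp x (φ := 0) (by simp))

theorem weakLp_smul_le (hp : 0 < p) {c : ℝ} (hc : 0 ≤ c) {t : Fin m → ℝ} (ht : ∀ j, |t j| ≤ c)
    (x : Fin m → E) : weakLp p (fun j => t j • x j) ≤ c * weakLp p x := by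
  refine weakLp_le fun φ hφ => ?_
  calc (∑ j, |φ (t j • x j)| ^ p) ^ (1 / p) ≤ (∑ j, (c * |φ (x j)|) ^ p) ^ (1 / p) := by
        refine rpow_sum_rpow_mono hp (fun j => abs_nonneg _) fun j => ?_
        rw [map_smul, smul_eq_mul, abs_mul]
        gcongr
        exact ht j
    _ = c * (∑ j, |φ (x j)| ^ p) ^ (1 / p) := rpow_sum_mul_rpow hp hc fun j => abs_nonneg _
    _ ≤ c * weakLp p x := by gcongr; exact le_weakLp hp x hφ

theorem weakLp_le_add_mul_dist (hp : 1 ≤ p) (x v : Fin m → E) :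
    weakLp p x ≤ weakLp p v + (m : ℝ) ^ (1 / p) * dist x v := by
  have hp₀ : 0 < p := one_pos.trans_le hp
  refine weakLp_le fun φ hφ => ?_
  have hdist : (∑ j, |φ (x j - v j)| ^ p) ^ (1 / p) ≤ (m : ℝ) ^ (1 / p) * dist x v := by
    calc (∑ j, |φ (x j - v j)| ^ p) ^ (1 / p) ≤ (∑ _j : Fin m, (dist x v * 1) ^ p) ^ (1 / p) := by
          refine rpow_sum_rpow_mono hp₀ (fun j => abs_nonneg _) fun j => ?_
          rw [mul_one, dist_eq_norm]
          exact (abs_apply_le_of_norm_le_one hφ _).trans (norm_le_pi_norm (x - v) j)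
      _ = (m : ℝ) ^ (1 / p) * dist x v := by
          rw [rpow_sum_mul_rpow hp₀ dist_nonneg fun _ => zero_le_one]
          simp [mul_comm]
  calc (∑ j, |φ (x j)| ^ p) ^ (1 / p) = (∑ j, |φ (v j) + φ (x j - v j)| ^ p) ^ (1 / p) := by
        simp
    _ ≤ (∑ j, |φ (v j)| ^ p) ^ (1 / p) + (∑ j, |φ (x j - v j)| ^ p) ^ (1 / p) :=
        Lp_add_le _ _ _ hp
    _ ≤ weakLp p v + (m : ℝ) ^ (1 / p) * dist x v := add_le_add (le_weakLp hp₀ v hφ) hdist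

theorem continuous_weakLp (hp : 1 ≤ p) : Continuous fun x : Fin m → E => weakLp p x :=
  (LipschitzWith.of_le_add_mul' _ (weakLp_le_add_mul_dist hp)).continuous

theorem wpNorm_sum_tmul_le {G : Type*} [NormedAddCommGroup G] [NormedSpace ℝ G] {q : ℝ}
    (hp : 0 < p) (hq : 0 < q) (n : Fin m → E) (h : Fin m → G) :
    wpNorm p q (∑ j, n j ⊗ₜ[ℝ] h j) ≤ weakLp p n * weakLp q h :=
  csInf_le ⟨0, fun _ ⟨_, n', h', _, hr⟩ =>
    hr ▸ mul_nonneg (weakLp_nonneg hp n') (weakLp_nonneg hq h')⟩ ⟨m, n, h, rfl, rfl⟩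

end WeakLp

theorem exists_dual_comp_eq_of_abs_le {E V : Type*} [NormedAddCommGroup E] [NormedSpace ℝ E]
    [AddCommGroup V] [Module ℝ V] (L : V →ₗ[ℝ] E) (g : V →ₗ[ℝ] ℝ) (h : ∀ v, |g v| ≤ ‖L v‖) :
    ∃ φ : StrongDual ℝ E, ‖φ‖ ≤ 1 ∧ ∀ v, φ (L v) = g v := by
  have hker : LinearMap.ker L ≤ LinearMap.ker g := fun v hv => by
    simpa [LinearMap.mem_ker.1 hv] using h v
  set ψ : LinearMap.range L →ₗ[ℝ] ℝ := (LinearMap.ker L).liftQ g hker ∘ₗ L.quotKerEquivRange.symm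
  have hψ : ∀ v, ψ ⟨L v, LinearMap.mem_range_self L v⟩ = g v := fun v => by
    simp [ψ, LinearMap.quotKerEquivRange_symm_apply_image]
  have hψle : ∀ y, ‖ψ y‖ ≤ 1 * ‖y‖ := by
    rintro ⟨_, v, rfl⟩
    simpa [hψ] using h v
  obtain ⟨φ, hφ, hφn⟩ := exists_extension_norm_eq _ (ψ.mkContinuous 1 hψle)
  exact ⟨φ, hφn ▸ LinearMap.mkContinuous_norm_le _ zero_le_one hψle, fun v => by
    simpa [hψ] using hφ ⟨L v, LinearMap.mem_range_self L v⟩⟩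

section RationalHull

variable {E : Type*} [AddCommGroup E]

def AddSubgroup.rationalHull (G : AddSubgroup E) : AddSubgroup E where
  carrier := {v | ∃ N : ℕ, 0 < N ∧ N • v ∈ G}
  zero_mem' := ⟨1, one_pos, by simp⟩
  add_mem' := by
    rintro v w ⟨N₁, hN₁, hv⟩ ⟨N₂, hN₂, hw⟩
    refine ⟨N₁ * N₂, Nat.mul_pos hN₁ hN₂, ?_⟩
    rw [smul_add, show (N₁ * N₂) • v = N₂ • N₁ • v by rw [smul_smul, mul_comm],
      ← smul_smul]
    exact G.add_mem (G.nsmul_mem hv N₂) (G.nsmul_mem hw N₁)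
  neg_mem' := by
    rintro v ⟨N, hN, hv⟩
    exact ⟨N, hN, by simpa using G.neg_mem hv⟩

theorem AddSubgroup.exists_nsmul_mem_of_forall_mem_rationalHull {G : AddSubgroup E} {m : ℕ}
    {x : Fin m → E} (hx : ∀ j, x j ∈ G.rationalHull) : ∃ N : ℕ, 0 < N ∧ ∀ j, N • x j ∈ G := by
  choose N hN hNx using hx
  refine ⟨∏ j, N j, prod_pos fun j _ => hN j, fun j => ?_⟩
  obtain ⟨d, hd⟩ := dvd_prod_of_mem N (mem_univ j)
  rw [hd, mul_comm, ← smul_smul]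
  exact G.nsmul_mem (hNx j) d

theorem AddSubgroup.ratCast_smul_mem_rationalHull [Module ℝ E] {G : AddSubgroup E} {g : E}
    (hg : g ∈ G) (a : ℚ) : (a : ℝ) • g ∈ G.rationalHull := by
  refine ⟨a.den, a.den_pos, ?_⟩
  rw [← Nat.cast_smul_eq_nsmul ℝ, smul_smul,
    show (a.den : ℝ) * a = a.num by exact_mod_cast a.den_mul_eq_num, Int.cast_smul_eq_zsmul]
  exact G.zsmul_mem hg _

end RationalHull

section PNuclear

variable {E F : Type*} [NormedAddCommGroup E] [NormedSpace ℝ E] [NormedAddCommGroup F]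
  [NormedSpace ℝ F] {p q K : ℝ} {u : E →L[ℝ] F}

def PNuclearBoundOn (p q K : ℝ) (u : E →L[ℝ] F) (S : Set E) : Prop :=
  ∀ (m : ℕ) (x : Fin m → E), (∀ j, x j ∈ S) → ∀ φ : Fin m → StrongDual ℝ F,
    |∑ j, φ j (u (x j))| ≤ K * weakLp p x * weakLp q φ

theorem PNuclearBoundOn.rationalHull (hp : 0 < p) (hq : 0 < q) (hK : 0 ≤ K)
    {G : AddSubgroup E} (h : PNuclearBoundOn p q K u G) :
    PNuclearBoundOn p q K u G.rationalHull := by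
  intro m x hx φ
  obtain ⟨N, hN, hNx⟩ := AddSubgroup.exists_nsmul_mem_of_forall_mem_rationalHull hx
  have hN' : (0 : ℝ) < N := Nat.cast_pos.2 hN
  have hscaled := h m (fun j => (N : ℝ) • x j)
    (fun j => by rw [Nat.cast_smul_eq_nsmul]; exact hNx j) (fun j => (N : ℝ)⁻¹ • φ j)
  have hx' : weakLp p (fun j => (N : ℝ) • x j) ≤ N * weakLp p x :=
    weakLp_smul_le hp hN'.le (t := fun _ => (N : ℝ)) (fun _ => (abs_of_pos hN').le) x
  have hφ' : weakLp q (fun j => (N : ℝ)⁻¹ • φ j) ≤ (N : ℝ)⁻¹ * weakLp q φ :=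
    weakLp_smul_le hq (inv_nonneg.2 hN'.le) (t := fun _ => (N : ℝ)⁻¹)
      (fun _ => (abs_of_pos (inv_pos.2 hN')).le) φ
  calc |∑ j, φ j (u (x j))| = |∑ j, ((N : ℝ)⁻¹ • φ j) (u ((N : ℝ) • x j))| := by
        simp [hN'.ne']
    _ ≤ K * weakLp p (fun j => (N : ℝ) • x j) * weakLp q (fun j => (N : ℝ)⁻¹ • φ j) := hscaled
    _ ≤ K * (N * weakLp p x) * ((N : ℝ)⁻¹ * weakLp q φ) :=
        mul_le_mul (mul_le_mul_of_nonneg_left hx' hK) hφ' (weakLp_nonneg hq _)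
          (mul_nonneg hK (mul_nonneg hN'.le (weakLp_nonneg hp x)))
    _ = K * weakLp p x * weakLp q φ := by field_simp

theorem PNuclearBoundOn.univ_of_dense (hp : 1 ≤ p) {S : Set E} (hS : Dense S)
    (h : PNuclearBoundOn p q K u S) : PNuclearBoundOn p q K u Set.univ := by
  intro m x _ φ
  have hclosed : IsClosed {x : Fin m → E | |∑ j, φ j (u (x j))| ≤ K * weakLp p x * weakLp q φ} :=
    isClosed_le (by fun_prop) (((continuous_weakLp hp).const_mul K).mul continuous_const)
  have hdense : Dense (Set.univ.pi fun _ : Fin m => S) := dense_pi _ fun _ _ => hS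
  exact hclosed.closure_subset_iff.2 (fun x hx => h m x (Set.mem_univ_pi.1 hx) φ) (hdense x)

theorem PNuclearBoundOn.isPNuclear (hp : 0 < p) (hq : 0 < q) (hK : 0 < K)
    (h : PNuclearBoundOn p q K u Set.univ) : IsPNuclear p q u := by
  refine ⟨K, hK, fun m x φ => ?_⟩
  have hsign : ∀ a : ℝ, |(SignType.sign a : ℝ)| ≤ 1 := fun a => by
    rcases SignType.sign a with _ | _ | _ <;> simp
  calc ∑ j, |φ j (u (x j))| = ∑ j, ((SignType.sign (φ j (u (x j))) : ℝ) • φ j) (u (x j)) := by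
        simp
    _ ≤ |∑ j, ((SignType.sign (φ j (u (x j))) : ℝ) • φ j) (u (x j))| := le_abs_self _
    _ ≤ K * weakLp p x * weakLp q (fun j => (SignType.sign (φ j (u (x j))) : ℝ) • φ j) :=
        h m x (fun _ => trivial) _
    _ ≤ K * weakLp p x * (1 * weakLp q φ) := by
        gcongr
        · exact mul_nonneg hK.le (weakLp_nonneg hp x)
        · exact weakLp_smul_le hq zero_le_one (fun j => hsign _) φ
    _ = K * weakLp p x * weakLp q φ := by rw [one_mul]

end PNuclear

section TensorPairing

variable {E F : Type*} [NormedAddCommGroup E] [NormedSpace ℝ E] [NormedAddCommGroup F]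
  [NormedSpace ℝ F]

def tensorPairing (u : E →L[ℝ] F) : E ⊗[ℝ] StrongDual ℝ F →ₗ[ℝ] ℝ :=
  TensorProduct.lift ((ContinuousLinearMap.coeLM ℝ).flip ∘ₗ u.toLinearMap)

theorem tensorPairing_sum_tmul (u : E →L[ℝ] F) {m : ℕ} (n : Fin m → E)
    (h : Fin m → StrongDual ℝ F) :
    tensorPairing u (∑ j, n j ⊗ₜ[ℝ] h j) = ∑ j, h j (u (n j)) := by
  simp [tensorPairing]

theorem IsPNuclear.abs_sum_le_wpNorm {p q : ℝ} {u : E →L[ℝ] F} (h : IsPNuclear p q u) :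
    ∃ K > 0, ∀ (m : ℕ) (n : Fin m → E) (g : Fin m → StrongDual ℝ F),
      |∑ j, g j (u (n j))| ≤ K * wpNorm p q (∑ j, n j ⊗ₜ[ℝ] g j) := by
  obtain ⟨K, hK, hu⟩ := h
  refine ⟨K, hK, fun m n g => ?_⟩
  rw [← div_le_iff₀' hK]
  refine le_csInf ⟨_, m, n, g, rfl, rfl⟩ ?_
  rintro _ ⟨m', n', g', hz, rfl⟩
  rw [div_le_iff₀' hK, ← mul_assoc, ← tensorPairing_sum_tmul, hz, tensorPairing_sum_tmul]
  exact (abs_sum_le_sum_abs _ _).trans (hu m' n' g')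

end TensorPairing

section DifferenceSums

variable {Y E : Type*} [AddCommGroup E] {δ : Y → E} {y₀ : Y}

theorem exists_sum_sub_eq_of_mem_closure (h0 : δ y₀ = 0) {g : E}
    (hg : g ∈ AddSubgroup.closure (Set.range δ)) :
    ∃ (M : ℕ) (x y : Fin M → Y), ∑ k, (δ (x k) - δ (y k)) = g := by
  induction hg using AddSubgroup.closure_induction with
  | mem _ hv =>
    obtain ⟨u, rfl⟩ := hv
    exact ⟨1, fun _ => u, fun _ => y₀, by simp [h0]⟩
  | zero => exact ⟨0, Fin.elim0, Fin.elim0, by simp⟩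
  | add _ _ _ _ ih₁ ih₂ =>
    obtain ⟨M₁, x₁, y₁, rfl⟩ := ih₁
    obtain ⟨M₂, x₂, y₂, rfl⟩ := ih₂
    exact ⟨M₁ + M₂, Fin.append x₁ x₂, Fin.append y₁ y₂, by
      simp only [Fin.sum_univ_add, Fin.append_left, Fin.append_right]⟩
  | neg _ _ ih =>
    obtain ⟨M, x, y, rfl⟩ := ih
    exact ⟨M, y, x, by simp⟩

theorem exists_sum_sub_eq_of_le (z : Y) {M M' : ℕ} (hM : M ≤ M') {x y : Fin M → Y} :
    ∃ x' y' : Fin M' → Y, ∑ k, (δ (x' k) - δ (y' k)) = ∑ k, (δ (x k) - δ (y k)) := by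
  induction M', hM using Nat.le_induction with
  | base => exact ⟨x, y, rfl⟩
  | succ n _ ih =>
    obtain ⟨x', y', h'⟩ := ih
    exact ⟨Fin.snoc (α := fun _ => Y) x' z, Fin.snoc (α := fun _ => Y) y' z, by
      simp only [Fin.sum_univ_castSucc, Fin.snoc_castSucc, Fin.snoc_last, sub_self, add_zero, h']⟩

theorem exists_rows_of_mem_closure (h0 : δ y₀ = 0) {m : ℕ} {r : Fin m → E}
    (hr : ∀ j, r j ∈ AddSubgroup.closure (Set.range δ)) :
    ∃ (m₂ : ℕ) (x y : Fin m → Fin m₂ → Y), ∀ j, ∑ i, (δ (x j i) - δ (y j i)) = r j := by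
  choose M x y hxy using fun j => exists_sum_sub_eq_of_mem_closure h0 (hr j)
  choose x' y' hxy' using fun j =>
    exists_sum_sub_eq_of_le (δ := δ) y₀ (le_sup (mem_univ j) : M j ≤ univ.sup M)
      (x := x j) (y := y j)
  exact ⟨_, x', y', fun j => (hxy' j).trans (hxy j)⟩

end DifferenceSums

theorem sum_finProdFinEquiv_symm {M : Type*} [AddCommMonoid M] {m₁ m₂ : ℕ}
    (g : Fin m₁ → Fin m₂ → M) :
    ∑ l, g (finProdFinEquiv.symm l).1 (finProdFinEquiv.symm l).2 = ∑ j, ∑ i, g j i := by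
  rw [← Fintype.sum_prod_type']
  exact (Fintype.sum_equiv finProdFinEquiv _ _ (by simp)).symm

namespace IsFreeSpace

variable {Y E : Type*} [MetricSpace Y] {y₀ : Y} [NormedAddCommGroup E] [NormedSpace ℝ E]
  [CompleteSpace E] {δ : Y → E}

theorem abs_sum_mul_le_norm (hF : IsFreeSpace Y y₀ E δ) {s : Y → ℝ} (hs : LipschitzWith 1 s)
    (hs0 : s y₀ = 0) {n : ℕ} (a : Fin n → ℝ) (x : Fin n → Y) :
    |∑ i, a i * s (x i)| ≤ ‖∑ i, a i • δ (x i)‖ := by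
  rw [hF.norm_eq]
  refine le_csSup ⟨∑ i, |a i| * dist (x i) y₀, ?_⟩ ⟨s, hs, hs0, rfl⟩
  rintro _ ⟨t, ht, ht0, rfl⟩
  refine (abs_sum_le_sum_abs _ _).trans (sum_le_sum fun i _ => ?_)
  rw [abs_mul]
  gcongr
  simpa [ht0, Real.dist_eq] using ht.dist_le_mul (x i) y₀

theorem exists_dual_comp_eq (hF : IsFreeSpace Y y₀ E δ) {s : Y → ℝ} (hs : LipschitzWith 1 s)
    (hs0 : s y₀ = 0) : ∃ φ : StrongDual ℝ E, ‖φ‖ ≤ 1 ∧ ∀ y, φ (δ y) = s y := by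
  obtain ⟨φ, hφ, hφs⟩ := exists_dual_comp_eq_of_abs_le (Finsupp.linearCombination ℝ δ)
    (Finsupp.linearCombination ℝ s) fun b => by
      simp only [Finsupp.linearCombination_apply, Finsupp.sum, smul_eq_mul]
      rw [← sum_coe_sort b.support, ← sum_coe_sort b.support,
        ← b.support.equivFin.symm.sum_comp, ← b.support.equivFin.symm.sum_comp]
      exact hF.abs_sum_mul_le_norm hs hs0 _ _
  exact ⟨φ, hφ, fun y => by simpa using hφs (Finsupp.single y 1)⟩

theorem lipschitzWith_comp (hF : IsFreeSpace Y y₀ E δ) {φ : StrongDual ℝ E} (hφ : ‖φ‖ ≤ 1) :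
    LipschitzWith 1 fun y => φ (δ y) :=
  LipschitzWith.of_dist_le_mul fun a b => by
    simpa [Real.dist_eq, ← map_sub, hF.isometry] using abs_apply_le_of_norm_le_one hφ (δ a - δ b)

theorem sSup_lipschitz_eq_weakLp (hF : IsFreeSpace Y y₀ E δ) {p : ℝ} (hp : 0 < p) {m₁ m₂ : ℕ}
    (x y : Fin m₁ → Fin m₂ → Y) :
    sSup {r : ℝ | ∃ s : Y → ℝ, LipschitzWith 1 s ∧ s y₀ = 0 ∧
        r = (∑ j, |∑ i, (s (x j i) - s (y j i))| ^ p) ^ (1 / p)} =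
      weakLp p fun j => ∑ i, (δ (x j i) - δ (y j i)) := by
  have hle : ∀ r ∈ {r : ℝ | ∃ s : Y → ℝ, LipschitzWith 1 s ∧ s y₀ = 0 ∧
      r = (∑ j, |∑ i, (s (x j i) - s (y j i))| ^ p) ^ (1 / p)},
      r ≤ weakLp p fun j => ∑ i, (δ (x j i) - δ (y j i)) := by
    rintro _ ⟨s, hs, hs0, rfl⟩
    obtain ⟨φ, hφ, hφs⟩ := hF.exists_dual_comp_eq hs hs0
    simpa [hφs] using le_weakLp hp (fun j => ∑ i, (δ (x j i) - δ (y j i))) hφ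
  refine le_antisymm (csSup_le ⟨_, 0, (LipschitzWith.const 0).weaken zero_le_one, rfl, rfl⟩ hle)
    (weakLp_le fun φ hφ => le_csSup ⟨_, hle⟩ ⟨_, hF.lipschitzWith_comp hφ, ?_, ?_⟩)
  · simp [hF.map_base]
  · simp

theorem dense_rationalHull (hF : IsFreeSpace Y y₀ E δ) :
    Dense ((AddSubgroup.closure (Set.range δ)).rationalHull : Set E) := by
  set A := (AddSubgroup.closure (Set.range δ)).rationalHull
  have hspan : (Submodule.span ℝ (Set.range δ) : Set E) ⊆ closure A := by
    intro v hv
    obtain ⟨n, a, g, rfl⟩ := Submodule.mem_span_set'.1 hv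
    have hcont : Continuous fun b : Fin n → ℝ => ∑ i, b i • (g i : E) := by fun_prop
    have hrat : DenseRange (Pi.map fun _ : Fin n => ((↑) : ℚ → ℝ)) :=
      DenseRange.piMap fun _ => Rat.denseRange_cast
    refine closure_mono ?_ (mem_closure_image hcont.continuousAt (hrat a) :)
    rintro _ ⟨_, ⟨b, rfl⟩, rfl⟩
    exact sum_mem fun i _ => AddSubgroup.ratCast_smul_mem_rationalHull
      (AddSubgroup.subset_closure (g i).2) (b i)
  rw [dense_iff_closure_eq, Set.eq_univ_iff_forall]
  intro v
  refine closure_minimal hspan isClosed_closure ?_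
  rw [← Submodule.topologicalClosure_coe, hF.dense_span]
  trivial

end IsFreeSpace

section Linearization

variable {Y W FY FW : Type*} [NormedAddCommGroup FY] [NormedSpace ℝ FY] [NormedAddCommGroup FW]
  [NormedSpace ℝ FW] {δY : Y → FY} {δW : W → FW} {p q : ℝ} {T : Y → W} {Tt : FY →L[ℝ] FW}

theorem sum_sub_eq_sum_apply_linearization (hTt : ∀ x, Tt (δY x) = δW (T x)) {m₁ m₂ : ℕ}
    (x y : Fin m₁ → Fin m₂ → Y) (f : Fin m₁ → StrongDual ℝ FW) :
    ∑ j, ∑ i, (f j (δW (T (x j i))) - f j (δW (T (y j i)))) =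
      ∑ j, f j (Tt (∑ i, (δY (x j i) - δY (y j i)))) := by
  simp [← hTt]

theorem msLipPNuclear_of_isPNuclear (hTt : ∀ x, Tt (δY x) = δW (T x))
    (h : IsPNuclear p q Tt) : MSLipPNuclear p q δY δW T := by
  obtain ⟨K, hK, hbound⟩ := h.abs_sum_le_wpNorm
  refine ⟨K, hK, fun k x y f => ?_⟩
  simpa [← hTt] using hbound k (fun l => δY (x l) - δY (y l)) f

variable [MetricSpace Y] [CompleteSpace FY] {y₀ : Y}

theorem MSLipPNuclear.abs_sum_sum_le (hF : IsFreeSpace Y y₀ FY δY) (hp : 0 < p) (hq : 0 < q)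
    (h : MSLipPNuclear p q δY δW T) :
    ∃ K > 0, ∀ (m₁ m₂ : ℕ) (x y : Fin m₁ → Fin m₂ → Y) (f : Fin m₁ → StrongDual ℝ FW),
      |∑ j, ∑ i, (f j (δW (T (x j i))) - f j (δW (T (y j i))))| ≤
        K * sSup {r : ℝ | ∃ s : Y → ℝ, LipschitzWith 1 s ∧ s y₀ = 0 ∧
            r = (∑ j, |∑ i, (s (x j i) - s (y j i))| ^ p) ^ (1 / p)} *
          weakLp q f := by
  obtain ⟨K, hK, hT⟩ := h
  refine ⟨K, hK, fun m₁ m₂ x y f => ?_⟩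
  let e : Fin (m₁ * m₂) ≃ Fin m₁ × Fin m₂ := finProdFinEquiv.symm
  have hflat := hT (m₁ * m₂) (fun l => x (e l).1 (e l).2) (fun l => y (e l).1 (e l).2)
    (fun l => f (e l).1)
  rw [sum_finProdFinEquiv_symm (fun j i => f j (δW (T (x j i))) - f j (δW (T (y j i)))),
    sum_finProdFinEquiv_symm (fun j i => (δY (x j i) - δY (y j i)) ⊗ₜ[ℝ] f j)] at hflat
  simp_rw [← TensorProduct.sum_tmul] at hflat
  rw [hF.sSup_lipschitz_eq_weakLp hp, mul_assoc]
  exact hflat.trans (mul_le_mul_of_nonneg_left (wpNorm_sum_tmul_le hp hq _ _) hK.le)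

theorem isPNuclear_of_abs_sum_sum_le (hF : IsFreeSpace Y y₀ FY δY)
    (hpq : p.HolderConjugate q) (hTt : ∀ x, Tt (δY x) = δW (T x))
    (h : ∃ K > 0, ∀ (m₁ m₂ : ℕ) (x y : Fin m₁ → Fin m₂ → Y) (f : Fin m₁ → StrongDual ℝ FW),
      |∑ j, ∑ i, (f j (δW (T (x j i))) - f j (δW (T (y j i))))| ≤
        K * sSup {r : ℝ | ∃ s : Y → ℝ, LipschitzWith 1 s ∧ s y₀ = 0 ∧
            r = (∑ j, |∑ i, (s (x j i) - s (y j i))| ^ p) ^ (1 / p)} *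
          weakLp q f) :
    IsPNuclear p q Tt := by
  obtain ⟨K, hK, hrows⟩ := h
  have hlattice : PNuclearBoundOn p q K Tt (AddSubgroup.closure (Set.range δY)) := by
    intro m r hr φ
    obtain ⟨m₂, x, y, hxy⟩ := exists_rows_of_mem_closure hF.map_base hr
    have := hrows m m₂ x y φ
    rw [sum_sub_eq_sum_apply_linearization hTt, hF.sSup_lipschitz_eq_weakLp hpq.pos] at this
    simpa only [hxy] using this
  exact ((hlattice.rationalHull hpq.pos hpq.symm.pos hK.le).univ_of_dense hpq.lt.le
    hF.dense_rationalHull).isPNuclear hpq.pos hpq.symm.pos hK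

end Linearization

theorem msLipPNuclear_tfae_general
    {Y W FY FW : Type*} [MetricSpace Y] [Inhabited Y]
    [NormedAddCommGroup FY] [NormedSpace ℝ FY] [CompleteSpace FY]
    [NormedAddCommGroup FW] [NormedSpace ℝ FW]
    {δY : Y → FY} {δW : W → FW}
    (hFY : IsFreeSpace Y default FY δY)
    {p q : ℝ} (hpq : p.HolderConjugate q)
    (T : Y → W)
    (Tt : FY →L[ℝ] FW) (hTt : ∀ x, Tt (δY x) = δW (T x)) :
    (MSLipPNuclear p q δY δW T ↔
      ∃ K > 0, ∀ (m₁ m₂ : ℕ) (x y : Fin m₁ → Fin m₂ → Y) (f : Fin m₁ → StrongDual ℝ FW),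
        |∑ j, ∑ i, (f j (δW (T (x j i))) - f j (δW (T (y j i))))| ≤
          K * sSup {r : ℝ | ∃ s : Y → ℝ, LipschitzWith 1 s ∧ s default = 0 ∧
              r = (∑ j, |∑ i, (s (x j i) - s (y j i))| ^ p) ^ (1 / p)} *
            weakLp q f) ∧
    (MSLipPNuclear p q δY δW T ↔ IsPNuclear p q Tt) := by
  have h12 (h : MSLipPNuclear p q δY δW T) := h.abs_sum_sum_le hFY hpq.pos hpq.symm.pos
  have h23 := isPNuclear_of_abs_sum_sum_le hFY hpq hTt
  have h31 := msLipPNuclear_of_isPNuclear (p := p) (q := q) hTt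
  exact ⟨⟨h12, h31 ∘ h23⟩, ⟨h23 ∘ h12, h31⟩⟩

/-- Theorem 3.6: equivalence of (1) `T` MS-Lipschitz `p`-nuclear,
(2) the inequality (3.4), and (3) `T̃` (Cohen) `p`-nuclear. -/
theorem msLipPNuclear_tfae
    {Y W FY FW : Type*} [MetricSpace Y] [Inhabited Y] [MetricSpace W] [Inhabited W]
    [NormedAddCommGroup FY] [NormedSpace ℝ FY] [CompleteSpace FY]
    [NormedAddCommGroup FW] [NormedSpace ℝ FW] [CompleteSpace FW]
    {δY : Y → FY} {δW : W → FW}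
    (hFY : IsFreeSpace Y default FY δY) (hFW : IsFreeSpace W default FW δW)
    {p q : ℝ} (hpq : p.HolderConjugate q)
    (T : Y → W) (hTlip : ∃ K, LipschitzWith K T) (hT0 : T default = default)
    (Tt : FY →L[ℝ] FW) (hTt : ∀ x, Tt (δY x) = δW (T x)) :
    (MSLipPNuclear p q δY δW T ↔
      ∃ K > 0, ∀ (m₁ m₂ : ℕ) (x y : Fin m₁ → Fin m₂ → Y) (f : Fin m₁ → StrongDual ℝ FW),
        |∑ j, ∑ i, (f j (δW (T (x j i))) - f j (δW (T (y j i))))| ≤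
          K * sSup {r : ℝ | ∃ s : Y → ℝ, LipschitzWith 1 s ∧ s default = 0 ∧
              r = (∑ j, |∑ i, (s (x j i) - s (y j i))| ^ p) ^ (1 / p)} *
            weakLp q f) ∧
    (MSLipPNuclear p q δY δW T ↔ IsPNuclear p q Tt) :=
  msLipPNuclear_tfae_general hFY hpq T Tt hTt
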